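/- Let α ≥ 0, d > 0, k > 0, γ > 0, h₀ > 0, T_∞ > 0. Then there exists a unique ν > 0 such that h₀ T_∞ / (γ 2^α d^{(α+1)/2}) = ν^{α+1} [ M(α/2 + 1/2, 1/2, ν²) + 2(√d h₀/k) ν M(α/2 + 1, 3/2, ν²) ]. -/

import Mathlib

/-!
The right-hand side is `ν ^ (α + 1) * g ν` with `g` continuous, monotone on `[0, ∞)` and
`g 0 = M(α/2 + 1/2, 1/2, 0) = 1`. Such a product is strictly increasing from `0` to `∞` on
`[0, ∞)`, so it takes the positive value on the left exactly once, by the intermediate value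
theorem. The properties of `M` come from its series: for `a ≥ 0`, `b > 0` the coefficients are
nonnegative and dominated by those of `exp ((a + b) / b * z)`.
-/

open Real Filter Topology

/-- The Kummer confluent hypergeometric function `M(a,b,z)`, defined by its power series. -/
noncomputable def kummerM (a b z : ℝ) : ℝ :=
  ∑' s : ℕ, ((ascPochhammer ℝ s).eval a / ((ascPochhammer ℝ s).eval b * (Nat.factorial s : ℝ)))
      * z ^ s

open Set Nat

section Kummer

variable {a b : ℝ}

noncomputable def kummerCoeff (a b : ℝ) (s : ℕ) : ℝ :=
  (ascPochhammer ℝ s).eval a / ((ascPochhammer ℝ s).eval b * s !)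

lemma kummerM_eq_tsum (a b z : ℝ) : kummerM a b z = ∑' s, kummerCoeff a b s * z ^ s := rfl

lemma ascPochhammer_eval_nonneg (ha : 0 ≤ a) (s : ℕ) : 0 ≤ (ascPochhammer ℝ s).eval a := by
  induction s with
  | zero => simp
  | succ n ih =>
    rw [ascPochhammer_succ_eval]
    positivity

lemma ascPochhammer_eval_le_pow_mul (ha : 0 ≤ a) (hb : 0 < b) (s : ℕ) :
    (ascPochhammer ℝ s).eval a ≤ ((a + b) / b) ^ s * (ascPochhammer ℝ s).eval b := by
  induction s with
  | zero => simp
  | succ n ih =>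
    have hfactor : a + n ≤ (a + b) / b * (b + n) := by
      rw [div_mul_eq_mul_div, le_div_iff₀ hb]
      nlinarith [(Nat.cast_nonneg n : (0 : ℝ) ≤ n)]
    calc (ascPochhammer ℝ (n + 1)).eval a = (ascPochhammer ℝ n).eval a * (a + n) :=
          ascPochhammer_succ_eval _ _
      _ ≤ ((a + b) / b) ^ n * (ascPochhammer ℝ n).eval b * ((a + b) / b * (b + n)) := by
          gcongr
          exact mul_nonneg (by positivity) (ascPochhammer_eval_nonneg hb.le n)
      _ = ((a + b) / b) ^ (n + 1) * (ascPochhammer ℝ (n + 1)).eval b := by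
          rw [ascPochhammer_succ_eval]
          ring

lemma kummerCoeff_nonneg (ha : 0 ≤ a) (hb : 0 < b) (s : ℕ) : 0 ≤ kummerCoeff a b s := by
  have := ascPochhammer_eval_nonneg ha s
  have := ascPochhammer_pos s b hb
  unfold kummerCoeff
  positivity

lemma kummerCoeff_le (ha : 0 ≤ a) (hb : 0 < b) (s : ℕ) :
    kummerCoeff a b s ≤ ((a + b) / b) ^ s / s ! := by
  have hpos := ascPochhammer_pos s b hb
  calc kummerCoeff a b s
      ≤ ((a + b) / b) ^ s * (ascPochhammer ℝ s).eval b / ((ascPochhammer ℝ s).eval b * s !) := by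
        unfold kummerCoeff
        gcongr
        exact ascPochhammer_eval_le_pow_mul ha hb s
    _ = ((a + b) / b) ^ s / s ! := by
        field_simp

lemma norm_kummerCoeff_mul_pow_le (ha : 0 ≤ a) (hb : 0 < b) (s : ℕ) (z : ℝ) :
    ‖kummerCoeff a b s * z ^ s‖ ≤ ((a + b) / b * |z|) ^ s / s ! := by
  rw [norm_mul, Real.norm_of_nonneg (kummerCoeff_nonneg ha hb s), norm_pow, Real.norm_eq_abs,
    mul_pow, mul_div_right_comm]
  gcongr
  exact kummerCoeff_le ha hb s

lemma summable_kummerCoeff_mul_pow (ha : 0 ≤ a) (hb : 0 < b) (z : ℝ) :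
    Summable fun s => kummerCoeff a b s * z ^ s :=
  .of_norm_bounded (Real.summable_pow_div_factorial _) (norm_kummerCoeff_mul_pow_le ha hb · z)

@[simp]
lemma kummerM_zero (a b : ℝ) : kummerM a b 0 = 1 := by
  rw [kummerM_eq_tsum, tsum_eq_single 0 fun s hs => by simp [hs]]
  simp [kummerCoeff]

lemma continuous_kummerM (ha : 0 ≤ a) (hb : 0 < b) : Continuous (kummerM a b) := by
  refine continuous_iff_continuousAt.2 fun z => ?_
  have hball : ContinuousOn (kummerM a b) (Icc (-(|z| + 1)) (|z| + 1)) := by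
    refine continuousOn_tsum (fun s => (continuous_const.mul (continuous_pow s)).continuousOn)
      (Real.summable_pow_div_factorial ((a + b) / b * (|z| + 1))) fun s x hx => ?_
    refine (norm_kummerCoeff_mul_pow_le ha hb s x).trans ?_
    gcongr
    exact abs_le.2 hx
  exact hball.continuousAt (Icc_mem_nhds (by linarith [abs_nonneg z, neg_abs_le z])
    (by linarith [le_abs_self z]))

lemma monotoneOn_kummerM (ha : 0 ≤ a) (hb : 0 < b) : MonotoneOn (kummerM a b) (Ici 0) :=
  fun z hz w _ hzw => (summable_kummerCoeff_mul_pow ha hb z).tsum_le_tsum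
    (fun s => mul_le_mul_of_nonneg_left (pow_le_pow_left₀ hz hzw s) (kummerCoeff_nonneg ha hb s))
    (summable_kummerCoeff_mul_pow ha hb w)

lemma one_le_kummerM (ha : 0 ≤ a) (hb : 0 < b) {z : ℝ} (hz : 0 ≤ z) : 1 ≤ kummerM a b z :=
  kummerM_zero a b ▸ monotoneOn_kummerM ha hb self_mem_Ici hz hz

lemma monotoneOn_kummerM_sq (ha : 0 ≤ a) (hb : 0 < b) :
    MonotoneOn (fun x => kummerM a b (x ^ 2)) (Ici 0) :=
  (monotoneOn_kummerM ha hb).comp (fun _ hx _ _ hxy => pow_le_pow_left₀ hx hxy 2)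
    fun x _ => sq_nonneg x

end Kummer

section RpowMul

variable {p : ℝ} {g : ℝ → ℝ}

lemma strictMonoOn_rpow_mul (hp : 0 < p) (hg : MonotoneOn g (Ici 0)) (hg₀ : 0 < g 0) :
    StrictMonoOn (fun x => x ^ p * g x) (Ici 0) := fun x hx y hy hxy =>
  calc x ^ p * g x ≤ x ^ p * g y :=
        mul_le_mul_of_nonneg_left (hg hx hy hxy.le) (Real.rpow_nonneg hx p)
    _ < y ^ p * g y :=
        mul_lt_mul_of_pos_right (Real.rpow_lt_rpow hx hxy hp)
          (hg₀.trans_le (hg self_mem_Ici hy hy))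

lemma tendsto_rpow_mul_atTop (hp : 0 < p) (hg : MonotoneOn g (Ici 0)) (hg₀ : 0 < g 0) :
    Tendsto (fun x => x ^ p * g x) atTop atTop := by
  refine tendsto_atTop_mono' _ ?_ ((tendsto_rpow_atTop hp).atTop_mul_const hg₀)
  filter_upwards [eventually_ge_atTop 0] with x hx
  exact mul_le_mul_of_nonneg_left (hg self_mem_Ici hx hx) (Real.rpow_nonneg hx p)

lemma existsUnique_pos_rpow_mul_eq (hp : 0 < p) (hg : MonotoneOn g (Ici 0)) (hg₀ : 0 < g 0)
    (hgc : ContinuousOn g (Ici 0)) {C : ℝ} (hC : 0 < C) :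
    ∃! x : ℝ, 0 < x ∧ C = x ^ p * g x := by
  set F := fun x : ℝ => x ^ p * g x
  have hF₀ : F 0 = 0 := by simp [F, Real.zero_rpow hp.ne']
  obtain ⟨R, hCR, hR₀⟩ := ((tendsto_rpow_mul_atTop hp hg hg₀).eventually_ge_atTop C).and
    (eventually_ge_atTop 0) |>.exists
  have hFc : ContinuousOn F (Icc 0 R) :=
    ((Real.continuous_rpow_const hp.le).continuousOn.mul hgc).mono Icc_subset_Ici_self
  obtain ⟨x, hx, hFx⟩ := intermediate_value_Icc hR₀ hFc ⟨hF₀.symm ▸ hC.le, hCR⟩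
  have hx₀ : 0 < x := hx.1.lt_of_ne fun h => hC.ne' (by rw [← hFx, ← h, hF₀])
  refine ⟨x, ⟨hx₀, hFx.symm⟩, fun y ⟨hy, hFy⟩ => ?_⟩
  exact (strictMonoOn_rpow_mul hp hg hg₀).injOn hy.le hx₀.le (hFy.symm.trans hFx.symm)

end RpowMul

/-- existence and uniqueness of the free-boundary coefficient for the
convective problem (P1). -/
theorem exists_unique_nu_P1 (α d k γ h₀ Tinf : ℝ)
    (hα : 0 ≤ α) (hd : 0 < d) (hk : 0 < k) (hγ : 0 < γ) (hh : 0 < h₀) (hT : 0 < Tinf) :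
    ∃! ν : ℝ, 0 < ν ∧
      h₀ * Tinf / (γ * 2 ^ α * d ^ ((α + 1) / 2))
        = ν ^ (α + 1) * (kummerM (α / 2 + 1 / 2) (1 / 2) (ν ^ 2)
            + 2 * (Real.sqrt d * h₀ / k) * ν * kummerM (α / 2 + 1) (3 / 2) (ν ^ 2)) := by
  have ha₁ : 0 ≤ α / 2 + 1 / 2 := by positivity
  have ha₂ : 0 ≤ α / 2 + 1 := by positivity
  have hc : 0 ≤ 2 * (Real.sqrt d * h₀ / k) := by positivity
  have hmono : MonotoneOn (fun ν => kummerM (α / 2 + 1 / 2) (1 / 2) (ν ^ 2)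
      + 2 * (Real.sqrt d * h₀ / k) * ν * kummerM (α / 2 + 1) (3 / 2) (ν ^ 2)) (Ici 0) :=
    (monotoneOn_kummerM_sq ha₁ one_half_pos).add <|
      ((monotone_id.const_mul hc).monotoneOn _).mul (monotoneOn_kummerM_sq ha₂ (by norm_num))
        (fun ν hν => mul_nonneg hc hν)
        (fun ν _ => zero_le_one.trans (one_le_kummerM ha₂ (by norm_num) (sq_nonneg ν)))
  have hcont : Continuous fun ν => kummerM (α / 2 + 1 / 2) (1 / 2) (ν ^ 2)
      + 2 * (Real.sqrt d * h₀ / k) * ν * kummerM (α / 2 + 1) (3 / 2) (ν ^ 2) :=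
    ((continuous_kummerM ha₁ one_half_pos).comp (continuous_pow 2)).add <|
      (continuous_const.mul continuous_id).mul
        ((continuous_kummerM ha₂ (by norm_num)).comp (continuous_pow 2))
  exact existsUnique_pos_rpow_mul_eq (by positivity) hmono (by simp) hcont.continuousOn
    (by positivity)
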